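/- arXiv:1608.01619 — 2 statements merged into one kernel-verified Lean document; each statement's English description precedes it below -/
import Mathlib

section
/- Let A be a real m×n matrix and b ∈ ℝ^m, and let C = (A | b). The range of the map f : ℝ^n → ℝ^m, f(x) = μ(x)(Ax − b), equals the set { C y : y ∈ ℝ^{n+1}, ‖y‖₂ = 1, y_{n+1} < 0 }. In particular, for each x ∈ ℝ^n one has f(x) = C y with y = μ(x)·(x, −1)ᵀ, which is a unit vector with negative last component, and conversely for every unit vector y ∈ ℝ^{n+1} with y_{n+1} < 0 the vector x = −(1/y_{n+1})(y₁,…,y_n)ᵀ satisfies f(x) = C y. -/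
open Matrix BigOperators

/-- Euclidean norm of a vector in ℝ^k. -/
noncomputable def vnorm {k : ℕ} (v : Fin k → ℝ) : ℝ := Real.sqrt (∑ i, (v i) ^ 2)

/-- μ(x) = (1 + xᵀx)^(−1/2). -/
noncomputable def mu {n : ℕ} (x : Fin n → ℝ) : ℝ := 1 / Real.sqrt (1 + x ⬝ᵥ x)

/-!
Since `C (x, -1) = A x - b` and `μ(x) = 1 / ‖(x, -1)‖`, the vector `μ(x) (x, -1)` is the
normalisation of `(x, -1)` and is mapped by `C` to `f(x)`. Conversely, a unit vector `y` with last
entry `c < 0` equals `(-c) (x, -1)` for `x = -(1/c) (y₁, …, yₙ)`, and taking norms forces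
`-c = 1 / ‖(x, -1)‖ = μ(x)`, so `C y = f(x)`.
-/

lemma vnorm_eq_norm {k : ℕ} (v : Fin k → ℝ) :
    vnorm v = ‖(WithLp.toLp 2 v : EuclideanSpace ℝ (Fin k))‖ := by
  simp [vnorm, EuclideanSpace.norm_eq]

lemma vnorm_smul {k : ℕ} (t : ℝ) (v : Fin k → ℝ) : vnorm (t • v) = |t| * vnorm v := by
  rw [vnorm_eq_norm, vnorm_eq_norm, WithLp.toLp_smul, norm_smul, Real.norm_eq_abs]

lemma vnorm_pos {k : ℕ} {v : Fin k → ℝ} (hv : v ≠ 0) : 0 < vnorm v := by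
  rw [vnorm_eq_norm, norm_pos_iff]
  exact fun h => hv (congrArg WithLp.ofLp h)

lemma mu_eq_inv_vnorm_snoc {n : ℕ} (x : Fin n → ℝ) :
    mu x = (vnorm (Fin.snoc x (-1) : Fin (n + 1) → ℝ))⁻¹ := by
  simp [mu, vnorm, Fin.sum_univ_castSucc, dotProduct, sq, add_comm]

lemma snoc_ne_zero {α : Type*} [Zero α] {n : ℕ} (x : Fin n → α) {a : α} (ha : a ≠ 0) :
    (Fin.snoc x a : Fin (n + 1) → α) ≠ 0 :=
  fun h => ha (by simpa using congrFun h (Fin.last n))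

lemma vnorm_snoc_neg_one_pos {n : ℕ} (x : Fin n → ℝ) :
    0 < vnorm (Fin.snoc x (-1) : Fin (n + 1) → ℝ) :=
  vnorm_pos (snoc_ne_zero x (by norm_num))

lemma mu_pos {n : ℕ} (x : Fin n → ℝ) : 0 < mu x := by
  rw [mu_eq_inv_vnorm_snoc]
  exact inv_pos.mpr (vnorm_snoc_neg_one_pos x)

lemma vnorm_mu_smul_snoc {n : ℕ} (x : Fin n → ℝ) :
    vnorm (mu x • (Fin.snoc x (-1) : Fin (n + 1) → ℝ)) = 1 := by
  rw [vnorm_smul, abs_of_pos (mu_pos x), mu_eq_inv_vnorm_snoc]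
  exact inv_mul_cancel₀ (vnorm_snoc_neg_one_pos x).ne'

lemma eq_mu_of_vnorm_smul_snoc {n : ℕ} {x : Fin n → ℝ} {t : ℝ} (ht : 0 < t)
    (h : vnorm (t • (Fin.snoc x (-1) : Fin (n + 1) → ℝ)) = 1) : t = mu x := by
  rw [vnorm_smul, abs_of_pos ht] at h
  rw [mu_eq_inv_vnorm_snoc]
  exact eq_inv_of_mul_eq_one_left h

lemma snoc_dotProduct_snoc {α : Type*} [NonUnitalNonAssocSemiring α] {n : ℕ}
    (v w : Fin n → α) (a b : α) :
    (Fin.snoc v a : Fin (n + 1) → α) ⬝ᵥ Fin.snoc w b = v ⬝ᵥ w + a * b := by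
  simp [dotProduct, Fin.sum_univ_castSucc]

lemma of_snoc_mulVec_snoc {α : Type*} [CommSemiring α] {m n : ℕ}
    (A : Matrix (Fin m) (Fin n) α) (b : Fin m → α) (x : Fin n → α) (t : α) :
    (Matrix.of fun i => Fin.snoc (A i) (b i)) *ᵥ (Fin.snoc x t : Fin (n + 1) → α)
      = A *ᵥ x + t • b := by
  ext i
  simp [mulVec, snoc_dotProduct_snoc, mul_comm]

lemma eq_smul_snoc_neg_one {n : ℕ} (y : Fin (n + 1) → ℝ) (hy : y (Fin.last n) ≠ 0) :
    y = -y (Fin.last n) •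
      (Fin.snoc (fun i => -(1 / y (Fin.last n)) * y i.castSucc) (-1) : Fin (n + 1) → ℝ) := by
  ext j
  induction j using Fin.lastCases with
  | last => simp
  | cast i => simp [field]

theorem stmt_2 {m n : ℕ} (A : Matrix (Fin m) (Fin n) ℝ) (b : Fin m → ℝ)
    (C : Matrix (Fin m) (Fin (n + 1)) ℝ)
    (hC : C = Matrix.of fun i => Fin.snoc (A i) (b i))
    (f : (Fin n → ℝ) → (Fin m → ℝ))
    (hf : ∀ x, f x = mu x • (A.mulVec x - b)) :
    Set.range f =
      {z : Fin m → ℝ | ∃ y : Fin (n + 1) → ℝ,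
        vnorm y = 1 ∧ y (Fin.last n) < 0 ∧ z = C.mulVec y} ∧
    (∀ x : Fin n → ℝ,
      vnorm (mu x • (Fin.snoc x (-1) : Fin (n + 1) → ℝ)) = 1 ∧
      (mu x • (Fin.snoc x (-1) : Fin (n + 1) → ℝ)) (Fin.last n) < 0 ∧
      f x = C.mulVec (mu x • (Fin.snoc x (-1) : Fin (n + 1) → ℝ))) ∧
    (∀ y : Fin (n + 1) → ℝ, vnorm y = 1 → y (Fin.last n) < 0 →
      f (fun i => -(1 / y (Fin.last n)) * y i.castSucc) = C.mulVec y) := by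
  have hf_mulVec : ∀ x, f x = C *ᵥ (mu x • (Fin.snoc x (-1) : Fin (n + 1) → ℝ)) := fun x => by
    rw [hf, hC, mulVec_smul, of_snoc_mulVec_snoc, neg_one_smul, sub_eq_add_neg]
  have forward : ∀ x : Fin n → ℝ,
      vnorm (mu x • (Fin.snoc x (-1) : Fin (n + 1) → ℝ)) = 1 ∧
      (mu x • (Fin.snoc x (-1) : Fin (n + 1) → ℝ)) (Fin.last n) < 0 ∧
      f x = C *ᵥ (mu x • (Fin.snoc x (-1) : Fin (n + 1) → ℝ)) := fun x =>
    ⟨vnorm_mu_smul_snoc x, by simpa using mu_pos x, hf_mulVec x⟩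
  have converse : ∀ y : Fin (n + 1) → ℝ, vnorm y = 1 → y (Fin.last n) < 0 →
      f (fun i => -(1 / y (Fin.last n)) * y i.castSucc) = C *ᵥ y := by
    intro y hy hlast
    have hy_eq := eq_smul_snoc_neg_one y hlast.ne
    have hmu := eq_mu_of_vnorm_smul_snoc (neg_pos.mpr hlast) (hy_eq ▸ hy)
    rw [hf_mulVec, ← hmu, ← hy_eq]
  refine ⟨Set.ext fun z => ⟨?_, ?_⟩, forward, converse⟩
  · rintro ⟨x, rfl⟩
    exact ⟨_, forward x⟩
  · rintro ⟨y, hy, hlast, rfl⟩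
    exact ⟨_, converse y hy hlast⟩
end

section
/- Let A be a real m×n matrix and b ∈ ℝ^m. Let x, h ∈ ℝ^n be such that 1 − μ(x)² (xᵀh) ≠ 0, and set α = 1/(1 − μ(x)² (xᵀh)). Then f(x + α h) = τ̂ (f(x) + J(x) h), where τ̂ = α · μ(x + αh)/μ(x). -/
/-! Factoring out μ(x), f(x) + J(x)h = μ(x)((1 − μ(x)²xᵀh)(Ax − b) + Ah) = (μ(x)/α)(A(x + αh) − b),
while f(x + αh) = μ(x + αh)(A(x + αh) − b): the two are proportional with ratio τ̂. -/

open Matrix BigOperators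

/-- f(x) = μ(x)(Ax − b). -/
noncomputable def fTLS {m n : ℕ} (A : Matrix (Fin m) (Fin n) ℝ) (b : Fin m → ℝ)
    (x : Fin n → ℝ) : Fin m → ℝ := mu x • (A.mulVec x - b)

/-- Jacobian J(x) = μ(x) A − μ(x)³ (Ax − b) xᵀ. -/
noncomputable def jac {m n : ℕ} (A : Matrix (Fin m) (Fin n) ℝ) (b : Fin m → ℝ)
    (x : Fin n → ℝ) : Matrix (Fin m) (Fin n) ℝ :=
  mu x • A - (mu x) ^ 3 • Matrix.vecMulVec (A.mulVec x - b) x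

lemma jac_mulVec {m n : ℕ} (A : Matrix (Fin m) (Fin n) ℝ) (b : Fin m → ℝ) (x h : Fin n → ℝ) :
    jac A b x *ᵥ h = mu x • A *ᵥ h - (mu x ^ 3 * (x ⬝ᵥ h)) • (A *ᵥ x - b) := by
  rw [jac, sub_mulVec, smul_mulVec, smul_mulVec, vecMulVec_mulVec, op_smul_eq_smul, smul_smul]

lemma fTLS_add_jac_mulVec {m n : ℕ} (A : Matrix (Fin m) (Fin n) ℝ) (b : Fin m → ℝ)
    (x h : Fin n → ℝ) :
    fTLS A b x + jac A b x *ᵥ h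
      = mu x • ((1 - mu x ^ 2 * (x ⬝ᵥ h)) • (A *ᵥ x - b) + A *ᵥ h) := by
  rw [fTLS, jac_mulVec]
  module

theorem stmt_6 {m n : ℕ} (A : Matrix (Fin m) (Fin n) ℝ) (b : Fin m → ℝ)
    (x h : Fin n → ℝ)
    (hne : 1 - (mu x) ^ 2 * (x ⬝ᵥ h) ≠ 0)
    (α : ℝ) (hα : α = 1 / (1 - (mu x) ^ 2 * (x ⬝ᵥ h)))
    (τhat : ℝ) (hτ : τhat = α * (mu (x + α • h) / mu x)) :
    fTLS A b (x + α • h) = τhat • (fTLS A b x + (jac A b x).mulVec h) := by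
  have hαc : α * (1 - mu x ^ 2 * (x ⬝ᵥ h)) = 1 := by rw [hα, one_div, inv_mul_cancel₀ hne]
  rw [fTLS_add_jac_mulVec, hτ, smul_smul, mul_assoc, div_mul_cancel₀ _ (mu_pos x).ne', fTLS,
    mulVec_add, mulVec_smul]
  linear_combination (norm := module) -hαc • (mu (x + α • h) • (A *ᵥ x - b))
end
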